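/- arXiv:1806.08590 — 3 statements merged into one kernel-verified Lean document; each statement's English description precedes it below -/
import Mathlib

section
/- Let Γ ≤ Δ be countable discrete groups. For every measure-preserving action a ∈ A(Γ,X,μ), the type of the co-induced action equals the co-induced IRS of the type: type(CIND_Γ^Δ(a)) = CIND_Γ^Δ(type(a)). In particular, if a, b ∈ A(Γ,X,μ) satisfy type(a) = type(b), then type(CIND_Γ^Δ(a)) = type(CIND_Γ^Δ(b)). -/
/-!
An element `δ` of `core_Δ(Γ)` fixes every coset and acts on the coordinate `t` of `f ∈ X^T` through
`t⁻¹δt ∈ Γ`, so `δ` stabilizes `f` iff `t⁻¹δt` stabilizes `f t` for every `t`; as the coordinates of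
a `μ^T`-random `f` are independent, `N_F` has measure `∏_t type(a)(N_{t⁻¹Ft})` when `F ⊆ core_Δ(Γ)`.
An element `δ ∉ core_Δ(Γ)` moves some coset, `t ↦ s ≠ t`, and fixing `f` then forces `f t` to be a
fixed measurable image of the independent coordinate `f s`: an event of measure zero since `μ` has
no atoms. The sets `N_F` form a generating π-system, so these values determine the IRS.
-/

open MeasureTheory

namespace IRSPaper


/-! ## Basic setup: the space of subgroups, invariant random subgroups -/

/-- The conjugation action of a group on its space of subgroups: `g • H = gHg⁻¹`. -/
def conjSub {G : Type*} [Group G] (g : G) (H : Subgroup G) : Subgroup G :=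
  Subgroup.map ((MulAut.conj g).toMonoidHom) H

/-- The topology on the space of subgroups of `G`, induced from the product topology
on `G → Bool` (i.e. the topology of `2^G`). -/
noncomputable instance instTopSub (G : Type*) [Group G] : TopologicalSpace (Subgroup G) :=
  TopologicalSpace.induced
    (fun (H : Subgroup G) (g : G) => @decide (g ∈ H) (Classical.dec _)) inferInstance

/-- The Borel σ-algebra on the space of subgroups. -/
noncomputable instance instMeasSub (G : Type*) [Group G] : MeasurableSpace (Subgroup G) :=
  borel _

instance instBorelSub (G : Type*) [Group G] : BorelSpace (Subgroup G) := ⟨rfl⟩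

/-- An invariant random subgroup: a Borel probability measure on `Sub(G)` which is invariant
under the conjugation action of `G`. -/
def IsIRS {G : Type*} [Group G] (θ : Measure (Subgroup G)) : Prop :=
  IsProbabilityMeasure θ ∧ ∀ g : G, Measure.map (conjSub g) θ = θ

/-- The basic set `N_F = {H ∈ Sub(G) : F ⊆ H}`. -/
def NSet {G : Type*} [Group G] (F : Set G) : Set (Subgroup G) :=
  {H : Subgroup G | F ⊆ (H : Set G)}

/-- For `Γ ≤ Δ` and `S ⊆ Δ`, the set of subgroups of `Γ` containing every element of `Γ`
whose image in `Δ` lies in `S`.  When `S = t⁻¹Ft ⊆ Γ`, this is exactly the basic set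
`N_{t⁻¹Ft}^Γ ⊆ Sub(Γ)`. -/
def NpullSet {Δ : Type*} [Group Δ] (Γ : Subgroup Δ) (S : Set Δ) : Set (Subgroup ↥Γ) :=
  {Λ : Subgroup ↥Γ | ∀ x : ↥Γ, (x : Δ) ∈ S → x ∈ Λ}

/-- `T` is a transversal for the left cosets `Δ/Γ`: each left coset `dΓ` contains exactly
one element of `T`. -/
def IsLeftTransversal {Δ : Type*} [Group Δ] (Γ : Subgroup Δ) (T : Set Δ) : Prop :=
  ∀ d : Δ, ∃! t : Δ, t ∈ T ∧ d⁻¹ * t ∈ Γ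

/-- The defining property of the co-induced invariant random subgroup
`ν = CIND_Γ^Δ(θ)` (with respect to the transversal `T`):  for every finite `F ⊆ Δ`,
`ν(N_F) = 0` if `F ⊄ core_Δ(Γ)` and `ν(N_F) = ∏_{t ∈ T} θ(N_{t⁻¹Ft}^Γ)` if `F ⊆ core_Δ(Γ)`. -/
def CindSpec {Δ : Type*} [Group Δ] (Γ : Subgroup Δ) (T : Set Δ)
    (θ : Measure (Subgroup ↥Γ)) (ν : Measure (Subgroup Δ)) : Prop :=
  ∀ F : Finset Δ,
    (¬ (F : Set Δ) ⊆ (Γ.normalCore : Set Δ) → ν (NSet (F : Set Δ)) = 0) ∧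
    ((F : Set Δ) ⊆ (Γ.normalCore : Set Δ) →
      ν (NSet (F : Set Δ)) =
        ∏' t : T, θ (NpullSet Γ ((fun d => (t : Δ)⁻¹ * d * (t : Δ)) '' (F : Set Δ))))

/-- Ergodicity of a (not necessarily probability-) measure-preserving action given by
an explicit family of maps: every invariant measurable set is null or conull. -/
def ErgodicAct {G α : Type*} [MeasurableSpace α] (act : G → α → α) (μ : Measure α) : Prop :=
  ∀ s : Set α, MeasurableSet s → (∀ g : G, act g ⁻¹' s = s) → μ s = 0 ∨ μ sᶜ = 0

/-- Weak mixing of an action: the diagonal action on the square is ergodic. -/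
def WeaklyMixingAct {G α : Type*} [MeasurableSpace α] (act : G → α → α) (μ : Measure α) : Prop :=
  ErgodicAct (fun (g : G) (p : α × α) => (act g p.1, act g p.2)) (μ.prod μ)

/-- A measure is non-atomic (has no atoms) if every singleton is null. -/
def NonAtomicMeasure {α : Type*} [MeasurableSpace α] (μ : Measure α) : Prop :=
  ∀ x : α, μ {x} = 0

/-- The kernel of an IRS `θ` of `Γ`: the set of `γ ∈ Γ` with `θ(N_γ) = 1`.  (For a probability
measure this set is a subgroup; taking `Subgroup.closure` makes it a `Subgroup` on the nose.) -/
def kerIRS {Δ : Type*} [Group Δ] (Γ : Subgroup Δ) (θ : Measure (Subgroup ↥Γ)) : Subgroup ↥Γ :=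
  Subgroup.closure {x : ↥Γ | θ {Λ : Subgroup ↥Γ | x ∈ Λ} = 1}

/-- `core_Δ(ker(θ))`, viewed as a subgroup of `Δ`. -/
def coreKer {Δ : Type*} [Group Δ] (Γ : Subgroup Δ) (θ : Measure (Subgroup ↥Γ)) : Subgroup Δ :=
  ((kerIRS Γ θ).map Γ.subtype).normalCore

/-! ## Measure-preserving actions, stabilizer type, product measures -/

/-- `a` is a measure-preserving (Borel) action of `G` on `(X,μ)`. -/
def IsMPAction {G X : Type*} [Group G] [MeasurableSpace X] (a : G → X → X)
    (μ : Measure X) : Prop :=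
  (∀ g : G, Measurable (a g)) ∧ (∀ g : G, Measure.map (a g) μ = μ) ∧
    a 1 = id ∧ ∀ g h : G, a (g * h) = a g ∘ a h

/-- The stabilizer of a point, as a subgroup (for an action, `{g | a g x = x}` is a
subgroup, so taking `Subgroup.closure` of it does not change it). -/
def stabSub {G X : Type*} [Group G] (a : G → X → X) (x : X) : Subgroup G :=
  Subgroup.closure {g : G | a g x = x}

/-- The type of an action: the distribution of the stabilizer of a `μ`-random point. -/
noncomputable def typeM {G X : Type*} [Group G] [MeasurableSpace X]
    (a : G → X → X) (μ : Measure X) : Measure (Subgroup G) :=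
  Measure.map (fun x => stabSub a x) μ

/-- `ν` is the product measure `μ^ι` on `ι → X`: a probability measure whose finite-dimensional
cylinder sets have the product measure (this characterizes `μ^ι` uniquely). -/
def IsProdMeasure {ι X : Type*} [MeasurableSpace X] (μ : Measure X)
    (ν : Measure (ι → X)) : Prop :=
  IsProbabilityMeasure ν ∧
    ∀ (s : Finset ι) (f : ι → Set X), (∀ i, MeasurableSet (f i)) →
      ν {x : ι → X | ∀ i ∈ s, x i ∈ f i} = ∏ i ∈ s, μ (f i)

section SubgroupSpace

variable {G : Type*} [Group G]

lemma mem_conjSub {d g : G} {H : Subgroup G} : g ∈ conjSub d H ↔ d⁻¹ * g * d ∈ H := by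
  simp only [conjSub, Subgroup.mem_map, MulEquiv.coe_toMonoidHom, MulAut.conj_apply]
  constructor
  · rintro ⟨x, hx, rfl⟩
    simpa [mul_assoc] using hx
  · exact fun h => ⟨_, h, by group⟩

lemma isPiSystem_NSet : IsPiSystem (Set.range fun F : Finset G => NSet (F : Set G)) := by
  classical
  rintro _ ⟨F, rfl⟩ _ ⟨F', rfl⟩ _
  exact ⟨F ∪ F', by ext; simp [NSet, Set.union_subset_iff]⟩

variable [Countable G]

lemma measurable_subgroup_iff {Ω : Type*} [mΩ : MeasurableSpace Ω] {f : Ω → Subgroup G} :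
    Measurable f ↔ ∀ g : G, MeasurableSet {ω | g ∈ f ω} := by
  have hpi : instMeasSub G = MeasurableSpace.comap
      (fun (H : Subgroup G) (g : G) => @decide (g ∈ H) (Classical.dec _)) MeasurableSpace.pi := by
    have hborel : (MeasurableSpace.pi : MeasurableSpace (G → Bool)) = borel _ :=
      BorelSpace.measurable_eq
    rw [hborel]; exact borel_comap
  rw [hpi, measurable_comap_iff, measurable_pi_iff]
  refine forall_congr' fun g => ?_
  have hpre : (fun ω => @decide (g ∈ f ω) (Classical.dec _)) ⁻¹' {true} = {ω | g ∈ f ω} := by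
    ext; simp
  exact ⟨fun h => hpre ▸ h (measurableSet_singleton true), fun h => measurable_to_bool (hpre ▸ h)⟩

lemma measurableSet_setOf_mem (g : G) : MeasurableSet {H : Subgroup G | g ∈ H} :=
  measurable_subgroup_iff.1 measurable_id g

lemma measurableSet_NSet {F : Set G} (hF : F.Countable) : MeasurableSet (NSet F) := by
  have : NSet F = ⋂ g ∈ F, {H : Subgroup G | g ∈ H} := by ext; simp [NSet, Set.subset_def]
  exact this ▸ .biInter hF fun g _ => measurableSet_setOf_mem g

lemma instMeasSub_eq_generateFrom_NSet :
    instMeasSub G =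
      MeasurableSpace.generateFrom (Set.range fun F : Finset G => NSet (F : Set G)) := by
  refine le_antisymm ?_ (MeasurableSpace.generateFrom_le ?_)
  · refine (measurable_subgroup_iff (Ω := Subgroup G) (f := id)
      (mΩ := MeasurableSpace.generateFrom _)).2 (fun g => ?_) |>.le_map
    refine MeasurableSpace.measurableSet_generateFrom ⟨{g}, ?_⟩
    ext; simp [NSet]
  · rintro _ ⟨F, rfl⟩
    exact measurableSet_NSet F.countable_toSet

lemma ext_of_NSet {θ θ' : Measure (Subgroup G)} [IsProbabilityMeasure θ] [IsProbabilityMeasure θ']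
    (h : ∀ F : Finset G, θ (NSet (F : Set G)) = θ' (NSet (F : Set G))) : θ = θ' :=
  ext_of_generate_finite _ instMeasSub_eq_generateFrom_NSet isPiSystem_NSet
    (by rintro _ ⟨F, rfl⟩; exact h F) (by simp)

lemma measurable_conjSub (d : G) : Measurable (conjSub d) :=
  measurable_subgroup_iff.2 fun g => by
    simpa only [mem_conjSub] using measurableSet_setOf_mem (d⁻¹ * g * d)

end SubgroupSpace

lemma measurableSet_NpullSet {Δ : Type*} [Group Δ] [Countable Δ] (Γ : Subgroup Δ) (S : Set Δ) :
    MeasurableSet (NpullSet Γ S) :=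
  measurableSet_NSet (Set.to_countable (Subtype.val ⁻¹' S))

lemma CindSpec.eq {Δ : Type*} [Group Δ] [Countable Δ] {Γ : Subgroup Δ} {T : Set Δ}
    {θ : Measure (Subgroup Γ)} {ν₁ ν₂ : Measure (Subgroup Δ)} [IsProbabilityMeasure ν₁]
    [IsProbabilityMeasure ν₂] (h₁ : CindSpec Γ T θ ν₁) (h₂ : CindSpec Γ T θ ν₂) : ν₁ = ν₂ :=
  ext_of_NSet fun F => by
    by_cases hF : (F : Set Δ) ⊆ Γ.normalCore
    · rw [(h₁ F).2 hF, (h₂ F).2 hF]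
    · rw [(h₁ F).1 hF, (h₂ F).1 hF]

section Stabilizer

variable {G X : Type*} [Group G] {a : G → X → X}

abbrev mulActionOfLaws (h1 : a 1 = id) (hmul : ∀ g h : G, a (g * h) = a g ∘ a h) :
    MulAction G X where
  smul := a
  one_smul x := congrFun h1 x
  mul_smul g h x := congrFun (hmul g h) x

lemma stabSub_eq_stabilizer (h1 : a 1 = id) (hmul : ∀ g h : G, a (g * h) = a g ∘ a h) (x : X) :
    stabSub a x = @MulAction.stabilizer G X _ (mulActionOfLaws h1 hmul) x := by
  let _ := mulActionOfLaws h1 hmul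
  exact Subgroup.closure_eq (MulAction.stabilizer G x)

lemma mem_stabSub_iff (h1 : a 1 = id) (hmul : ∀ g h : G, a (g * h) = a g ∘ a h) {x : X} {g : G} :
    g ∈ stabSub a x ↔ a g x = x := by
  rw [stabSub_eq_stabilizer h1 hmul]; rfl

lemma conjSub_stabSub (h1 : a 1 = id) (hmul : ∀ g h : G, a (g * h) = a g ∘ a h) (d : G) (x : X) :
    conjSub d (stabSub a x) = stabSub a (a d x) := by
  let _ := mulActionOfLaws h1 hmul
  rw [stabSub_eq_stabilizer h1 hmul, stabSub_eq_stabilizer h1 hmul]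
  exact (MulAction.stabilizer_smul_eq_stabilizer_map_conj d x).symm

variable [Countable G] [MeasurableSpace X] [MeasurableEq X] {μ : Measure X}

lemma measurable_stabSub (ha : IsMPAction a μ) : Measurable (stabSub a) :=
  measurable_subgroup_iff.2 fun g => by
    simp only [mem_stabSub_iff ha.2.2.1 ha.2.2.2]
    exact measurableSet_eq_fun (ha.1 g) measurable_id

lemma isIRS_typeM [IsProbabilityMeasure μ] (ha : IsMPAction a μ) : IsIRS (typeM a μ) := by
  have hstab := measurable_stabSub ha
  refine ⟨Measure.isProbabilityMeasure_map hstab.aemeasurable, fun d => ?_⟩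
  have hconj : conjSub d ∘ stabSub a = stabSub a ∘ a d :=
    funext (conjSub_stabSub ha.2.2.1 ha.2.2.2 d)
  rw [typeM, Measure.map_map (measurable_conjSub d) hstab, hconj,
    ← Measure.map_map hstab (ha.1 d), ha.2.1 d]

end Stabilizer

section ProductMeasure

variable {ι X : Type*} [MeasurableSpace X] {μ : Measure X} [IsProbabilityMeasure μ]

lemma IsProdMeasure.eq_infinitePi {ν : Measure (ι → X)} (hν : IsProdMeasure μ ν) :
    ν = Measure.infinitePi fun _ : ι => μ :=
  Measure.eq_infinitePi _ fun s t ht => hν.2 s t ht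

lemma infinitePi_map_comp_equiv (e : ι ≃ ι) :
    (Measure.infinitePi fun _ : ι => μ).map (fun f => f ∘ e) = Measure.infinitePi fun _ => μ := by
  convert Measure.infinitePi_map_piCongrLeft (fun _ : ι => μ) e.symm using 2
  ext f i
  simp [MeasurableEquiv.coe_piCongrLeft, Equiv.piCongrLeft_apply]

lemma infinitePi_map_comp_equiv_pi (e : ι ≃ ι) {g : ι → X → X}
    (hg : ∀ i, MeasurePreserving (g i) μ μ) :
    (Measure.infinitePi fun _ : ι => μ).map (fun f i => g i (f (e i))) =
      Measure.infinitePi fun _ => μ := by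
  have hcomp : (fun (f : ι → X) i => g i (f (e i))) = (fun f i => g i (f i)) ∘ (· ∘ e) := rfl
  have hgm : Measurable fun (f : ι → X) i => g i (f i) :=
    measurable_pi_lambda _ fun i => (hg i).measurable.comp (measurable_pi_apply i)
  rw [hcomp, ← Measure.map_map hgm (by fun_prop), infinitePi_map_comp_equiv,
    Measure.infinitePi_map_pi _ fun i => (hg i).measurable]
  simp only [(hg _).map_eq]

lemma Measure.prod_setOf_apply_eq_eq_zero {Y : Type*} [MeasurableSpace Y] [MeasurableEq Y]
    (μ : Measure X) (ν : Measure Y) [SFinite ν] [NullSingletonClass ν] {g : X → Y}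
    (hg : Measurable g) : μ.prod ν {p | g p.1 = p.2} = 0 := by
  have hgraph : MeasurableSet {p : X × Y | g p.1 = p.2} :=
    measurableSet_eq_fun (hg.comp measurable_fst) measurable_snd
  rw [Measure.prod_apply hgraph]
  simp [Set.preimage, eq_comm]

lemma infinitePi_setOf_apply_eq_eq_zero [MeasurableEq X] [NullSingletonClass μ] {i j : ι}
    (hij : i ≠ j) {g : X → X} (hg : Measurable g) :
    Measure.infinitePi (fun _ : ι => μ) {f | g (f i) = f j} = 0 := by
  have hpair : Measurable fun f : ι → X => (f i, f j) := by fun_prop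
  have hgraph : MeasurableSet {p : X × X | g p.1 = p.2} :=
    measurableSet_eq_fun (hg.comp measurable_fst) measurable_snd
  have hpre : {f : ι → X | g (f i) = f j} = (fun f => (f i, f j)) ⁻¹' {p | g p.1 = p.2} := rfl
  rw [hpre, ← Measure.map_apply hpair hgraph, Measure.infinitePi_map_eval_prod hij]
  exact Measure.prod_setOf_apply_eq_eq_zero μ μ hg

end ProductMeasure

section Cocycle

variable {Δ : Type*} [Group Δ] {Γ : Subgroup Δ} {T : Set Δ} (hT : IsLeftTransversal Γ T)
  {σ : Δ → T → T} {ρ : Δ → T → ↥Γ}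
  (hσρ : ∀ (δ : Δ) (t : T), δ * (t : Δ) = (σ δ t : Δ) * ((ρ δ t : ↥Γ) : Δ))
include hσρ

lemma coe_rho (δ : Δ) (t : T) : (ρ δ t : Δ) = (σ δ t : Δ)⁻¹ * δ * t := by
  rw [mul_assoc, hσρ]; group

include hT

lemma eq_sigma_of_mem {δ : Δ} {t t' : T} (h : (δ * t)⁻¹ * t' ∈ Γ) : t' = σ δ t := by
  obtain ⟨u, _, hu⟩ := hT (δ * t)
  have hσ : (δ * t)⁻¹ * (σ δ t : Δ) ∈ Γ := by
    simp [hσρ δ t, mul_assoc]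
  exact Subtype.ext ((hu _ ⟨t'.2, h⟩).trans (hu _ ⟨(σ δ t).2, hσ⟩).symm)

lemma sigma_one (t : T) : σ 1 t = t :=
  (eq_sigma_of_mem hT hσρ (by simp [Γ.one_mem])).symm

lemma sigma_mul (δ η : Δ) (t : T) : σ (δ * η) t = σ δ (σ η t) := by
  refine (eq_sigma_of_mem hT hσρ ?_).symm
  have h : (δ * η * t)⁻¹ * (σ δ (σ η t) : Δ) = (ρ η t : Δ)⁻¹ * (ρ δ (σ η t) : Δ)⁻¹ := by
    rw [coe_rho hσρ, coe_rho hσρ]; group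
  rw [h]
  exact Γ.mul_mem (Γ.inv_mem (ρ η t).2) (Γ.inv_mem (ρ δ (σ η t)).2)

lemma rho_one (t : T) : ρ 1 t = 1 :=
  Subtype.ext (by simp [coe_rho hσρ, sigma_one hT hσρ])

lemma rho_mul (δ η : Δ) (t : T) : ρ (δ * η) t = ρ δ (σ η t) * ρ η t :=
  Subtype.ext (by simp only [Subgroup.coe_mul, coe_rho hσρ, sigma_mul hT hσρ]; group)

lemma mem_normalCore_iff_forall_sigma_eq (δ : Δ) : δ ∈ Γ.normalCore ↔ ∀ t, σ δ t = t := by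
  refine ⟨fun hδ t => (eq_sigma_of_mem hT hσρ ?_).symm, fun h => ?_⟩
  · simpa [mul_assoc] using Γ.normalCore.inv_mem hδ (t : Δ)⁻¹
  · intro d
    obtain ⟨u, ⟨huT, hdu⟩, _⟩ := hT d⁻¹
    rw [inv_inv] at hdu
    have hρ : u⁻¹ * δ * u ∈ Γ := by
      simpa [coe_rho hσρ, h ⟨u, huT⟩] using (ρ δ ⟨u, huT⟩).2
    have hconj : d * δ * d⁻¹ = (d * u) * (u⁻¹ * δ * u) * (d * u)⁻¹ := by group
    rw [hconj]
    exact Γ.mul_mem (Γ.mul_mem hdu hρ) (Γ.inv_mem hdu)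

lemma coe_rho_inv_of_mem_normalCore {d : Δ} (hd : d ∈ Γ.normalCore) (t : T) :
    (((ρ d⁻¹ t)⁻¹ : Γ) : Δ) = (t : Δ)⁻¹ * d * t := by
  have hσ := (mem_normalCore_iff_forall_sigma_eq hT hσρ d⁻¹).1 (Γ.normalCore.inv_mem hd) t
  simp only [InvMemClass.coe_inv, coe_rho hσρ, hσ]
  group

lemma mem_NpullSet_conj_iff {F : Set Δ} (hF : F ⊆ Γ.normalCore) (t : T) {Λ : Subgroup Γ} :
    Λ ∈ NpullSet Γ ((fun d => (t : Δ)⁻¹ * d * t) '' F) ↔ ∀ d ∈ F, (ρ d⁻¹ t)⁻¹ ∈ Λ := by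
  refine ⟨fun h d hd => h _ ⟨d, hd, (coe_rho_inv_of_mem_normalCore hT hσρ (hF hd) t).symm⟩, ?_⟩
  rintro h γ ⟨d, hd, hγ⟩
  convert h d hd
  exact Subtype.ext (hγ.symm.trans (coe_rho_inv_of_mem_normalCore hT hσρ (hF hd) t).symm)

end Cocycle

section CoinducedAction

variable {Δ : Type*} [Group Δ] {Γ : Subgroup Δ} {T : Set Δ} {X : Type*}

def coindAction (σ : Δ → T → T) (ρ : Δ → T → ↥Γ) (a : ↥Γ → X → X) : Δ → (T → X) → T → X :=
  fun δ f t => a (ρ δ⁻¹ t)⁻¹ (f (σ δ⁻¹ t))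

variable (hT : IsLeftTransversal Γ T) {σ : Δ → T → T} {ρ : Δ → T → ↥Γ}
  (hσρ : ∀ (δ : Δ) (t : T), δ * (t : Δ) = (σ δ t : Δ) * ((ρ δ t : ↥Γ) : Δ)) {a : ↥Γ → X → X}
include hT hσρ

lemma coindAction_apply_of_mem_normalCore {d : Δ} (hd : d ∈ Γ.normalCore) (f : T → X) (t : T) :
    coindAction σ ρ a d f t = a (ρ d⁻¹ t)⁻¹ (f t) := by
  rw [coindAction, (mem_normalCore_iff_forall_sigma_eq hT hσρ d⁻¹).1 (Γ.normalCore.inv_mem hd)]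

variable [MeasurableSpace X] {μ : Measure X} (ha : IsMPAction a μ)
include ha

lemma coindAction_one : coindAction σ ρ a 1 = id := by
  ext f t
  simp [coindAction, rho_one hT hσρ, sigma_one hT hσρ, ha.2.2.1]

lemma coindAction_mul (δ η : Δ) :
    coindAction σ ρ a (δ * η) = coindAction σ ρ a δ ∘ coindAction σ ρ a η := by
  ext f t
  simp [coindAction, sigma_mul hT hσρ, rho_mul hT hσρ, ha.2.2.2]

lemma map_coindAction_infinitePi [IsProbabilityMeasure μ] (δ : Δ) :
    (Measure.infinitePi fun _ : T => μ).map (coindAction σ ρ a δ) =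
      Measure.infinitePi fun _ => μ := by
  let e : T ≃ T :=
    { toFun := σ δ⁻¹
      invFun := σ δ
      left_inv t := by rw [← sigma_mul hT hσρ, mul_inv_cancel, sigma_one hT hσρ]
      right_inv t := by rw [← sigma_mul hT hσρ, inv_mul_cancel, sigma_one hT hσρ] }
  exact infinitePi_map_comp_equiv_pi e fun t => ⟨ha.1 _, ha.2.1 _⟩

lemma isMPAction_coindAction [IsProbabilityMeasure μ] :
    IsMPAction (coindAction σ ρ a) (Measure.infinitePi fun _ : T => μ) :=
  ⟨fun _ => measurable_pi_lambda _ fun _ => (ha.1 _).comp (measurable_pi_apply _),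
    map_coindAction_infinitePi hT hσρ ha, coindAction_one hT hσρ ha, coindAction_mul hT hσρ ha⟩

lemma preimage_stabSub_coindAction_NSet {F : Set Δ} (hF : F ⊆ Γ.normalCore) :
    stabSub (coindAction σ ρ a) ⁻¹' NSet F =
      Set.univ.pi fun t : T => stabSub a ⁻¹' NpullSet Γ ((fun d => (t : Δ)⁻¹ * d * t) '' F) := by
  ext f
  simp only [Set.mem_preimage, Set.mem_univ_pi, mem_NpullSet_conj_iff hT hσρ hF,
    mem_stabSub_iff ha.2.2.1 ha.2.2.2]
  simp only [NSet, Set.mem_ofPred_eq, Set.subset_def, SetLike.mem_coe,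
    mem_stabSub_iff (coindAction_one hT hσρ ha) (coindAction_mul hT hσρ ha), funext_iff]
  constructor
  · intro h t d hd
    rw [← coindAction_apply_of_mem_normalCore (a := a) hT hσρ (hF hd)]
    exact h d hd t
  · intro h d hd t
    rw [coindAction_apply_of_mem_normalCore hT hσρ (hF hd)]
    exact h t d hd

variable [Countable Δ] [StandardBorelSpace X] [IsProbabilityMeasure μ]

lemma typeM_coindAction_NSet_of_subset {F : Set Δ} (hF : F ⊆ Γ.normalCore) :
    typeM (coindAction σ ρ a) (Measure.infinitePi fun _ : T => μ) (NSet F) =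
      ∏' t : T, typeM a μ (NpullSet Γ ((fun d => (t : Δ)⁻¹ * d * t) '' F)) := by
  have hstab := measurable_stabSub ha
  rw [typeM, Measure.map_apply (measurable_stabSub (isMPAction_coindAction hT hσρ ha))
    (measurableSet_NSet F.to_countable), preimage_stabSub_coindAction_NSet hT hσρ ha hF,
    Measure.infinitePi_pi_univ _ fun t => hstab (measurableSet_NpullSet Γ _)]
  simp only [typeM, Measure.map_apply hstab (measurableSet_NpullSet Γ _)]

lemma typeM_coindAction_NSet_of_not_subset [NullSingletonClass μ] {F : Set Δ}
    (hF : ¬ F ⊆ Γ.normalCore) :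
    typeM (coindAction σ ρ a) (Measure.infinitePi fun _ : T => μ) (NSet F) = 0 := by
  obtain ⟨δ, hδF, hδ⟩ := Set.not_subset.1 hF
  have hδ' : δ⁻¹ ∉ Γ.normalCore := fun h => hδ (by simpa using Γ.normalCore.inv_mem h)
  obtain ⟨t, ht⟩ : ∃ t, σ δ⁻¹ t ≠ t := by
    simpa [mem_normalCore_iff_forall_sigma_eq hT hσρ] using hδ'
  rw [typeM, Measure.map_apply (measurable_stabSub (isMPAction_coindAction hT hσρ ha))
    (measurableSet_NSet F.to_countable)]
  refine measure_mono_null (fun f hf => ?_)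
    (infinitePi_setOf_apply_eq_eq_zero ht (ha.1 (ρ δ⁻¹ t)⁻¹))
  have hfix := (mem_stabSub_iff (coindAction_one hT hσρ ha) (coindAction_mul hT hσρ ha)).1 (hf hδF)
  exact congrFun hfix t

lemma cindSpec_typeM_coindAction [NullSingletonClass μ] :
    CindSpec Γ T (typeM a μ) (typeM (coindAction σ ρ a) (Measure.infinitePi fun _ : T => μ)) :=
  fun _ => ⟨typeM_coindAction_NSet_of_not_subset hT hσρ ha,
    typeM_coindAction_NSet_of_subset hT hσρ ha⟩

end CoinducedAction

/-- The type of the co-induced action equals the co-induced IRS of the type: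
`type(CIND_Γ^Δ(a)) = CIND_Γ^Δ(type(a))` (expressed by saying that `type(CIND_Γ^Δ(a))` is an
IRS of `Δ` satisfying the defining property of `CIND_Γ^Δ(type(a))`, which determines it
uniquely).  In particular, if `type(a) = type(a')` then the co-induced actions have the
same type.  Here `T` is a transversal for `Δ/Γ`, `σ(δ,t) ∈ T` and `ρ(δ,t) ∈ Γ` are
determined by `δt = σ(δ,t)ρ(δ,t)`, and the co-induced action of `a` on `X^T` is
`(δ·f)(t) = a(ρ(δ⁻¹,t)⁻¹, f(σ(δ⁻¹,t)))`. -/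
theorem type_coinduced_action {Δ : Type*} [Group Δ] [Countable Δ] (Γ : Subgroup Δ)
    {X : Type*} [MeasurableSpace X] [StandardBorelSpace X]
    (μ : Measure X) [IsProbabilityMeasure μ] [NullSingletonClass μ]
    (T : Set Δ) (hT : IsLeftTransversal Γ T)
    (σ : Δ → T → T) (ρ : Δ → T → ↥Γ)
    (hσρ : ∀ (δ : Δ) (t : T), δ * (t : Δ) = (σ δ t : Δ) * ((ρ δ t : ↥Γ) : Δ))
    (ν : Measure (T → X)) (hν : IsProdMeasure μ ν)
    (a : ↥Γ → X → X) (ha : IsMPAction a μ) :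
    (IsIRS (typeM (fun (δ : Δ) (f : T → X) (t : T) => a (ρ δ⁻¹ t)⁻¹ (f (σ δ⁻¹ t))) ν) ∧
      CindSpec Γ T (typeM a μ)
        (typeM (fun (δ : Δ) (f : T → X) (t : T) => a (ρ δ⁻¹ t)⁻¹ (f (σ δ⁻¹ t))) ν)) ∧
    ∀ a' : ↥Γ → X → X, IsMPAction a' μ → typeM a' μ = typeM a μ →
      typeM (fun (δ : Δ) (f : T → X) (t : T) => a' (ρ δ⁻¹ t)⁻¹ (f (σ δ⁻¹ t))) ν =
      typeM (fun (δ : Δ) (f : T → X) (t : T) => a (ρ δ⁻¹ t)⁻¹ (f (σ δ⁻¹ t))) ν := by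
  obtain rfl := hν.eq_infinitePi
  have hIRS (b : ↥Γ → X → X) (hb : IsMPAction b μ) :
      IsIRS (typeM (coindAction σ ρ b) (Measure.infinitePi fun _ : T => μ)) :=
    isIRS_typeM (isMPAction_coindAction hT hσρ hb)
  refine ⟨⟨hIRS a ha, cindSpec_typeM_coindAction hT hσρ ha⟩, fun a' ha' htype => ?_⟩
  show typeM (coindAction σ ρ a') _ = typeM (coindAction σ ρ a) _
  have := (hIRS a ha).1
  have := (hIRS a' ha').1
  exact (htype ▸ cindSpec_typeM_coindAction hT hσρ ha').eq (cindSpec_typeM_coindAction hT hσρ ha)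

end IRSPaper
end

section
/- Let Λ ≤ Γ ≤ Δ be countable discrete groups and a ∈ A(Λ,X,μ). Then the measure-preserving Δ-actions CIND_Γ^Δ(CIND_Λ^Γ(a)) and CIND_Λ^Δ(a) are isomorphic. -/
/-!
Via the transversal `ι₂`, `Δ/Λ ≃ Δ/Γ × Γ/Λ` (`Subgroup.quotientEquivProdOfLE'`), so
`(X^{Γ/Λ})^{Δ/Γ} ≅ X^{Δ/Λ}` by uncurrying and reindexing, and this identification carries the
iterated product measure to the product measure. It turns the iterated co-induced action into the
co-induced action of `a` for the composite transversal `p ↦ ι₂(c) ι₁(e)` of `Δ/Λ`, where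
`(c, e)` is the image of `p`.
Co-induced actions for two transversals `σ, σ'` of `Δ/Λ` are conjugate by the coordinatewise
twist `f ↦ (p ↦ σ'(p)⁻¹σ(p) · f(p))`, which preserves the product measure since each
coordinate map preserves `μ`.
-/

open MeasureTheory

namespace IRSPaper


/-- The relational description of the co-induced action `b = CIND_Γ^Δ(a)` of
`Δ` on `X^{Δ/Γ}`, with respect to the section (transversal) `ιT : Δ/Γ → Δ`:
`(δ · f)(c) = ρ_T(δ⁻¹, ι_T(c))⁻¹ ·^a f(δ⁻¹ · c)`, where
`ρ_T(δ⁻¹, ι_T(c))⁻¹ = ι_T(c)⁻¹ δ ι_T(δ⁻¹ c) ∈ Γ`. -/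
def CoindRel {Δ X : Type*} [Group Δ] (Γ : Subgroup Δ) (ιT : Δ ⧸ Γ → Δ)
    (a : ↥Γ → X → X) (b : Δ → ((Δ ⧸ Γ) → X) → (Δ ⧸ Γ) → X) : Prop :=
  ∀ (δ : Δ) (f : (Δ ⧸ Γ) → X) (c : Δ ⧸ Γ) (γ : ↥Γ),
    (γ : Δ) = (ιT c)⁻¹ * δ * ιT (δ⁻¹ • c) → b δ f c = a γ (f (δ⁻¹ • c))

namespace IsProdMeasure

variable {ι κ X : Type*} [MeasurableSpace X] {μ : Measure X}

theorem measurableSet_box {s : Finset ι} {f : ι → Set X} (hf : ∀ i, MeasurableSet (f i)) :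
    MeasurableSet {x : ι → X | ∀ i ∈ s, x i ∈ f i} :=
  MeasurableSet.pi s.countable_toSet fun i _ => hf i

theorem unique {ν ν' : Measure (ι → X)} (h : IsProdMeasure μ ν) (h' : IsProdMeasure μ ν') :
    ν = ν' := by
  have := h.1
  have := h'.1
  refine ext_of_generate_finite _ generateFrom_squareCylinders.symm
    (isPiSystem_squareCylinders (fun _ => MeasurableSpace.isPiSystem_measurableSet)
      fun _ => MeasurableSet.univ) ?_ (by simp)
  rintro _ ⟨s, f, hf, rfl⟩
  have hf : ∀ i, MeasurableSet (f i) := fun i => hf i (Set.mem_univ i)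
  exact (h.2 s f hf).trans (h'.2 s f hf).symm

theorem map_piCongrRight {ν : Measure (ι → X)} (h : IsProdMeasure μ ν) (e : ι → X ≃ᵐ X)
    (he : ∀ i, Measure.map (e i) μ = μ) :
    IsProdMeasure μ (ν.map (MeasurableEquiv.piCongrRight e)) := by
  have := h.1
  refine ⟨Measure.isProbabilityMeasure_map (MeasurableEquiv.measurable _).aemeasurable,
    fun s f hf => ?_⟩
  rw [Measure.map_apply (MeasurableEquiv.measurable _) (measurableSet_box hf)]
  refine (h.2 s (fun i => e i ⁻¹' f i) fun i => (e i).measurable (hf i)).trans ?_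
  refine Finset.prod_congr rfl fun i _ => ?_
  rw [← Measure.map_apply (e i).measurable (hf i), he]

theorem map_arrowCongr' {ν : Measure (ι → X)} (h : IsProdMeasure μ ν) (e : ι ≃ κ) :
    IsProdMeasure μ (ν.map (MeasurableEquiv.arrowCongr' e (.refl X))) := by
  have := h.1
  refine ⟨Measure.isProbabilityMeasure_map (MeasurableEquiv.measurable _).aemeasurable,
    fun s f hf => ?_⟩
  rw [Measure.map_apply (MeasurableEquiv.measurable _) (measurableSet_box hf)]
  have hpre : MeasurableEquiv.arrowCongr' e (.refl X) ⁻¹' {x | ∀ k ∈ s, x k ∈ f k} =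
      {x | ∀ i ∈ s.map e.symm.toEmbedding, x i ∈ f (e i)} := by
    ext x
    show (∀ k ∈ s, x (e.symm k) ∈ f k) ↔ _
    simp only [Finset.mem_map_equiv, Equiv.symm_symm, Set.mem_ofPred_eq]
    exact ⟨fun hx i hi => by simpa using hx (e i) hi,
      fun hx k hk => by simpa using hx (e.symm k) (by simpa using hk)⟩
  rw [hpre, h.2 _ _ fun i => hf (e i), Finset.prod_map]
  simp

theorem map_curry_symm {ν₁ : Measure (κ → X)} {ν₂ : Measure (ι → κ → X)}
    (h₁ : IsProdMeasure μ ν₁) (h₂ : IsProdMeasure ν₁ ν₂) :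
    IsProdMeasure μ (ν₂.map (MeasurableEquiv.curry ι κ X).symm) := by
  classical
  have := h₂.1
  refine ⟨Measure.isProbabilityMeasure_map (MeasurableEquiv.measurable _).aemeasurable,
    fun s f hf => ?_⟩
  let t : ι → Finset κ := fun i => (s.filter (·.1 = i)).image Prod.snd
  have hs : ∀ q : ι × κ, q ∈ s ↔ q.1 ∈ s.image Prod.fst ∧ q.2 ∈ t q.1 := by
    rintro ⟨i, k⟩
    simpa [t] using fun h => ⟨k, h⟩
  have hpre : (MeasurableEquiv.curry ι κ X).symm ⁻¹' {x | ∀ q ∈ s, x q ∈ f q} =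
      {F | ∀ i ∈ s.image Prod.fst, F i ∈ {g : κ → X | ∀ k ∈ t i, g k ∈ f (i, k)}} := by
    ext F
    refine ⟨fun hF i hi k hk => hF (i, k) ((hs _).2 ⟨hi, hk⟩),
      fun hF q hq => hF q.1 ((hs q).1 hq).1 q.2 ((hs q).1 hq).2⟩
  rw [Measure.map_apply (MeasurableEquiv.measurable _) (measurableSet_box hf), hpre,
    h₂.2 _ _ fun i => measurableSet_box fun k => hf (i, k), Finset.prod_finset_product s _ t hs]
  exact Finset.prod_congr rfl fun i _ => h₁.2 _ _ fun k => hf (i, k)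

end IsProdMeasure

section Coinduction

variable {G X : Type*} [Group G] {H K : Subgroup G}

theorem inv_mul_mul_mem_of_rightInverse {ι : G ⧸ H → G}
    (hι : Function.RightInverse ι QuotientGroup.mk) (g : G) (c : G ⧸ H) :
    (ι c)⁻¹ * g * ι (g⁻¹ • c) ∈ H := by
  rw [mul_assoc, ← QuotientGroup.eq, ← smul_eq_mul, ← MulAction.Quotient.smul_mk, hι, hι,
    smul_inv_smul]

/-- `ρ(g⁻¹, ι c)⁻¹` in the notation of the paper. -/
def coindCocycle (ι : G ⧸ H → G) (hι : Function.RightInverse ι QuotientGroup.mk) (g : G)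
    (c : G ⧸ H) : H :=
  ⟨(ι c)⁻¹ * g * ι (g⁻¹ • c), inv_mul_mul_mem_of_rightInverse hι g c⟩

def coindAct (ι : G ⧸ H → G) (hι : Function.RightInverse ι QuotientGroup.mk)
    (a : H → X → X) (g : G) (f : G ⧸ H → X) : G ⧸ H → X :=
  fun c => a (coindCocycle ι hι g c) (f (g⁻¹ • c))

theorem CoindRel.eq_coindAct {ι : G ⧸ H → G} {a : H → X → X}
    {b : G → (G ⧸ H → X) → G ⧸ H → X} (hb : CoindRel H ι a b)
    (hι : Function.RightInverse ι QuotientGroup.mk) : b = coindAct ι hι a := by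
  funext g f c
  exact hb g f c _ rfl

theorem quotientEquivProdOfLE'_inv_smul (h_le : H ≤ K) {ι : G ⧸ K → G}
    (hι : Function.RightInverse ι QuotientGroup.mk) (g : G) (p : G ⧸ H) :
    Subgroup.quotientEquivProdOfLE' h_le ι hι (g⁻¹ • p) =
      (g⁻¹ • (Subgroup.quotientEquivProdOfLE' h_le ι hι p).1,
        (coindCocycle ι hι g (Subgroup.quotientEquivProdOfLE' h_le ι hι p).1)⁻¹ •
          (Subgroup.quotientEquivProdOfLE' h_le ι hι p).2) := by
  induction p using QuotientGroup.induction_on with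
  | H d =>
    refine Prod.ext rfl (congrArg QuotientGroup.mk (Subtype.ext ?_))
    change (ι (g⁻¹ • (d : G ⧸ K)))⁻¹ * (g⁻¹ * d) =
      ((ι d)⁻¹ * g * ι (g⁻¹ • (d : G ⧸ K)))⁻¹ * ((ι d)⁻¹ * d)
    group

def prodSection (h_le : H ≤ K) (ι : G ⧸ K → G) (hι : Function.RightInverse ι QuotientGroup.mk)
    (ι' : K ⧸ H.subgroupOf K → K) (p : G ⧸ H) : G :=
  ι (Subgroup.quotientEquivProdOfLE' h_le ι hι p).1 *
    ι' (Subgroup.quotientEquivProdOfLE' h_le ι hι p).2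

theorem prodSection_rightInverse (h_le : H ≤ K) {ι : G ⧸ K → G}
    (hι : Function.RightInverse ι QuotientGroup.mk) {ι' : K ⧸ H.subgroupOf K → K}
    (hι' : Function.RightInverse ι' QuotientGroup.mk) :
    Function.RightInverse (prodSection h_le ι hι ι') QuotientGroup.mk := by
  intro p
  let E := Subgroup.quotientEquivProdOfLE' h_le ι hι
  calc (QuotientGroup.mk (prodSection h_le ι hι ι' p) : G ⧸ H) = E.symm ((E p).1, ι' (E p).2) := rfl
    _ = p := by rw [hι', Equiv.symm_apply_apply]

theorem coindAct_coindAct (h_le : H ≤ K) {ι : G ⧸ K → G}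
    (hι : Function.RightInverse ι QuotientGroup.mk) {ι' : K ⧸ H.subgroupOf K → K}
    (hι' : Function.RightInverse ι' QuotientGroup.mk) (a : H → X → X) (g : G)
    (F : G ⧸ K → K ⧸ H.subgroupOf K → X) (p : G ⧸ H) :
    coindAct ι hι (coindAct ι' hι' fun h => a ⟨h, Subgroup.mem_subgroupOf.mp h.2⟩) g F
        (Subgroup.quotientEquivProdOfLE' h_le ι hι p).1
        (Subgroup.quotientEquivProdOfLE' h_le ι hι p).2 =
      coindAct (prodSection h_le ι hι ι') (prodSection_rightInverse h_le hι hι') a g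
        (fun q => F (Subgroup.quotientEquivProdOfLE' h_le ι hι q).1
          (Subgroup.quotientEquivProdOfLE' h_le ι hι q).2) p := by
  simp only [coindAct, quotientEquivProdOfLE'_inv_smul]
  congr 1
  apply Subtype.ext
  simp only [coindCocycle, prodSection, quotientEquivProdOfLE'_inv_smul, Subgroup.coe_mul,
    Subgroup.coe_inv]
  group

def sectionTransition (ι' ι : G ⧸ H → G) (hι' : Function.RightInverse ι' QuotientGroup.mk)
    (hι : Function.RightInverse ι QuotientGroup.mk) (p : G ⧸ H) : H :=
  ⟨(ι' p)⁻¹ * ι p, QuotientGroup.eq.mp ((hι' p).trans (hι p).symm)⟩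

theorem sectionTransition_mul_coindCocycle {ι' ι : G ⧸ H → G}
    (hι' : Function.RightInverse ι' QuotientGroup.mk)
    (hι : Function.RightInverse ι QuotientGroup.mk) (g : G) (p : G ⧸ H) :
    sectionTransition ι' ι hι' hι p * coindCocycle ι hι g p =
      coindCocycle ι' hι' g p * sectionTransition ι' ι hι' hι (g⁻¹ • p) :=
  Subtype.ext (by simp only [sectionTransition, coindCocycle, Subgroup.coe_mul]; group)

theorem apply_sectionTransition_coindAct {ι' ι : G ⧸ H → G}
    (hι' : Function.RightInverse ι' QuotientGroup.mk)
    (hι : Function.RightInverse ι QuotientGroup.mk) {a : H → X → X}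
    (hmul : ∀ h h', a (h * h') = a h ∘ a h') (g : G) (f : G ⧸ H → X) (p : G ⧸ H) :
    a (sectionTransition ι' ι hι' hι p) (coindAct ι hι a g f p) =
      coindAct ι' hι' a g (fun q => a (sectionTransition ι' ι hι' hι q) (f q)) p := by
  have hmul' : ∀ h h' x, a h (a h' x) = a (h * h') x := fun h h' x =>
    (congrFun (hmul h h') x).symm
  simp only [coindAct, hmul', sectionTransition_mul_coindCocycle]

end Coinduction

namespace IsMPAction

variable {G X : Type*} [Group G] [MeasurableSpace X] {a : G → X → X} {μ : Measure X}

theorem apply_inv_apply (ha : IsMPAction a μ) (g : G) (x : X) : a g⁻¹ (a g x) = x := by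
  rw [← Function.comp_apply (f := a g⁻¹), ← ha.2.2.2, inv_mul_cancel, ha.2.2.1, id]

def measurableEquiv (ha : IsMPAction a μ) (g : G) : X ≃ᵐ X where
  toFun := a g
  invFun := a g⁻¹
  left_inv := ha.apply_inv_apply g
  right_inv x := by simpa using ha.apply_inv_apply g⁻¹ x
  measurable_toFun := ha.1 g
  measurable_invFun := ha.1 g⁻¹

end IsMPAction

theorem coinduction_chain_rule_general
    {Δ : Type*} [Group Δ] (Λ Γ : Subgroup Δ) (hΛΓ : Λ ≤ Γ)
    {X : Type*} [MeasurableSpace X]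
    (μ : Measure X)
    (a : ↥Λ → X → X) (ha : IsMPAction a μ)
    (ι₁ : ↥Γ ⧸ (Λ.subgroupOf Γ) → ↥Γ)
    (hι₁ : ∀ c : ↥Γ ⧸ (Λ.subgroupOf Γ), (QuotientGroup.mk (ι₁ c) : ↥Γ ⧸ (Λ.subgroupOf Γ)) = c)
    (ι₂ : Δ ⧸ Γ → Δ) (hι₂ : ∀ c : Δ ⧸ Γ, (QuotientGroup.mk (ι₂ c) : Δ ⧸ Γ) = c)
    (ι₃ : Δ ⧸ Λ → Δ) (hι₃ : ∀ c : Δ ⧸ Λ, (QuotientGroup.mk (ι₃ c) : Δ ⧸ Λ) = c)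
    (ν₁ : Measure ((↥Γ ⧸ (Λ.subgroupOf Γ)) → X)) (hν₁ : IsProdMeasure μ ν₁)
    (ν₂ : Measure ((Δ ⧸ Γ) → (↥Γ ⧸ (Λ.subgroupOf Γ)) → X)) (hν₂ : IsProdMeasure ν₁ ν₂)
    (ν₃ : Measure ((Δ ⧸ Λ) → X)) (hν₃ : IsProdMeasure μ ν₃)
    (b₁ : ↥Γ → ((↥Γ ⧸ (Λ.subgroupOf Γ)) → X) → (↥Γ ⧸ (Λ.subgroupOf Γ)) → X)
    (hb₁ : CoindRel (Λ.subgroupOf Γ) ι₁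
      (fun (g : ↥(Λ.subgroupOf Γ)) => a ⟨((g : ↥Γ) : Δ), Subgroup.mem_subgroupOf.mp g.2⟩) b₁)
    (b₂ : Δ → ((Δ ⧸ Γ) → (↥Γ ⧸ (Λ.subgroupOf Γ)) → X) →
      (Δ ⧸ Γ) → (↥Γ ⧸ (Λ.subgroupOf Γ)) → X)
    (hb₂ : CoindRel Γ ι₂ b₁ b₂)
    (b₃ : Δ → ((Δ ⧸ Λ) → X) → (Δ ⧸ Λ) → X)
    (hb₃ : CoindRel Λ ι₃ a b₃) :
    ∃ (φ : ((Δ ⧸ Γ) → (↥Γ ⧸ (Λ.subgroupOf Γ)) → X) → (Δ ⧸ Λ) → X)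
      (ψ : ((Δ ⧸ Λ) → X) → (Δ ⧸ Γ) → (↥Γ ⧸ (Λ.subgroupOf Γ)) → X),
      Measurable φ ∧ Measurable ψ ∧ Measure.map φ ν₂ = ν₃ ∧
      (∀ᵐ f ∂ν₂, ψ (φ f) = f) ∧ (∀ᵐ f ∂ν₃, φ (ψ f) = f) ∧
      ∀ δ : Δ, ∀ᵐ f ∂ν₂, φ (b₂ δ f) = b₃ δ (φ f) := by
  let E := Subgroup.quotientEquivProdOfLE' hΛΓ ι₂ hι₂
  have hσ := prodSection_rightInverse hΛΓ hι₂ hι₁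
  let τ := sectionTransition ι₃ (prodSection hΛΓ ι₂ hι₂ ι₁) hι₃ hσ
  let U := (MeasurableEquiv.curry _ _ X).symm.trans (MeasurableEquiv.arrowCongr' E.symm (.refl X))
  let T := MeasurableEquiv.piCongrRight fun p => ha.measurableEquiv (τ p)
  refine ⟨U.trans T, (U.trans T).symm, (U.trans T).measurable, (U.trans T).symm.measurable, ?_,
    ae_of_all _ (U.trans T).symm_apply_apply, ae_of_all _ (U.trans T).apply_symm_apply,
    fun δ => ae_of_all _ fun F => funext fun p => ?_⟩
  · rw [MeasurableEquiv.coe_trans, ← Measure.map_map T.measurable U.measurable,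
      MeasurableEquiv.coe_trans, ← Measure.map_map (MeasurableEquiv.measurable _)
        (MeasurableEquiv.measurable _)]
    exact (((hν₁.map_curry_symm hν₂).map_arrowCongr' E.symm).map_piCongrRight _
      fun p => ha.2.1 (τ p)).unique hν₃
  · rw [hb₂.eq_coindAct hι₂, hb₁.eq_coindAct hι₁, hb₃.eq_coindAct hι₃]
    exact (congrArg (a (τ p)) (coindAct_coindAct hΛΓ hι₂ hι₁ a δ F p)).trans
      (apply_sectionTransition_coindAct hι₃ hσ ha.2.2.2 δ _ p)

/-- **Proposition 3.2 (chain rule for co-induction).** For `Λ ≤ Γ ≤ Δ` and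
`a ∈ A(Λ,X,μ)`, the actions `CIND_Γ^Δ(CIND_Λ^Γ(a))` and `CIND_Λ^Δ(a)` are isomorphic.
Here `b₁ = CIND_Λ^Γ(a)` acts on `Y = X^{Γ/Λ}` (with product measure `ν₁`),
`b₂ = CIND_Γ^Δ(b₁)` acts on `Y^{Δ/Γ}` (with product measure `ν₂`), and
`b₃ = CIND_Λ^Δ(a)` acts on `X^{Δ/Λ}` (with product measure `ν₃`). -/
theorem coinduction_chain_rule
    {Δ : Type*} [Group Δ] [Countable Δ] (Λ Γ : Subgroup Δ) (hΛΓ : Λ ≤ Γ)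
    {X : Type*} [MeasurableSpace X] [StandardBorelSpace X]
    (μ : Measure X) [IsProbabilityMeasure μ] [NullSingletonClass μ]
    (a : ↥Λ → X → X) (ha : IsMPAction a μ)
    (ι₁ : ↥Γ ⧸ (Λ.subgroupOf Γ) → ↥Γ)
    (hι₁ : ∀ c : ↥Γ ⧸ (Λ.subgroupOf Γ), (QuotientGroup.mk (ι₁ c) : ↥Γ ⧸ (Λ.subgroupOf Γ)) = c)
    (ι₂ : Δ ⧸ Γ → Δ) (hι₂ : ∀ c : Δ ⧸ Γ, (QuotientGroup.mk (ι₂ c) : Δ ⧸ Γ) = c)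
    (ι₃ : Δ ⧸ Λ → Δ) (hι₃ : ∀ c : Δ ⧸ Λ, (QuotientGroup.mk (ι₃ c) : Δ ⧸ Λ) = c)
    (ν₁ : Measure ((↥Γ ⧸ (Λ.subgroupOf Γ)) → X)) (hν₁ : IsProdMeasure μ ν₁)
    (ν₂ : Measure ((Δ ⧸ Γ) → (↥Γ ⧸ (Λ.subgroupOf Γ)) → X)) (hν₂ : IsProdMeasure ν₁ ν₂)
    (ν₃ : Measure ((Δ ⧸ Λ) → X)) (hν₃ : IsProdMeasure μ ν₃)
    (b₁ : ↥Γ → ((↥Γ ⧸ (Λ.subgroupOf Γ)) → X) → (↥Γ ⧸ (Λ.subgroupOf Γ)) → X)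
    (hb₁ : CoindRel (Λ.subgroupOf Γ) ι₁
      (fun (g : ↥(Λ.subgroupOf Γ)) => a ⟨((g : ↥Γ) : Δ), Subgroup.mem_subgroupOf.mp g.2⟩) b₁)
    (b₂ : Δ → ((Δ ⧸ Γ) → (↥Γ ⧸ (Λ.subgroupOf Γ)) → X) →
      (Δ ⧸ Γ) → (↥Γ ⧸ (Λ.subgroupOf Γ)) → X)
    (hb₂ : CoindRel Γ ι₂ b₁ b₂)
    (b₃ : Δ → ((Δ ⧸ Λ) → X) → (Δ ⧸ Λ) → X)
    (hb₃ : CoindRel Λ ι₃ a b₃) :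
    ∃ (φ : ((Δ ⧸ Γ) → (↥Γ ⧸ (Λ.subgroupOf Γ)) → X) → (Δ ⧸ Λ) → X)
      (ψ : ((Δ ⧸ Λ) → X) → (Δ ⧸ Γ) → (↥Γ ⧸ (Λ.subgroupOf Γ)) → X),
      Measurable φ ∧ Measurable ψ ∧ Measure.map φ ν₂ = ν₃ ∧
      (∀ᵐ f ∂ν₂, ψ (φ f) = f) ∧ (∀ᵐ f ∂ν₃, φ (ψ f) = f) ∧
      ∀ δ : Δ, ∀ᵐ f ∂ν₂, φ (b₂ δ f) = b₃ δ (φ f) :=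
  coinduction_chain_rule_general Λ Γ hΛΓ μ a ha ι₁ hι₁ ι₂ hι₂ ι₃ hι₃ ν₁ hν₁ ν₂ hν₂ ν₃ hν₃ b₁ hb₁ b₂
    hb₂ b₃ hb₃

end IRSPaper
end

section
/- Let Δ, Γ be countable discrete groups and φ : Δ → Γ a surjective group homomorphism. Let Φ : Sub(Γ) → Sub(Δ) be given by Φ(Λ) = φ⁻¹(Λ) and define Ψ : IRS(Γ) → IRS(Δ) by Ψ(θ) = Φ_*θ. Then Ψ is a well-defined, continuous, injective map, and for every θ ∈ IRS(Γ): if θ is ergodic then Ψ(θ) is ergodic; if θ is weakly mixing then Ψ(θ) is weakly mixing; and if θ is non-atomic then Ψ(θ) is non-atomic. -/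
/-!
For a surjection `φ : Δ → Γ`, the map `Λ ↦ φ⁻¹(Λ)` is a closed embedding of `Sub(Γ)` onto
the closed set of subgroups of `Δ` containing `ker φ`, and it intertwines conjugation by
`φ(d)` with conjugation by `d`. Pushing forward along it therefore preserves conjugation
invariance, is continuous and injective, keeps measures atom-free, and pulls an invariant set
of `Sub(Δ)` back to an invariant set of `Sub(Γ)` of the same measure, which gives ergodicity
and, applied to the square, weak mixing.
-/

open MeasureTheory

namespace IRSPaper


/-! ## The space `IRS(G)` with the weak* topology -/

/-- The space `IRS(G)` of invariant random subgroups of `G`, as a subspace of the space of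
Borel probability measures on `Sub(G)` with the topology of weak convergence. -/
def IRSSpace (G : Type*) [Group G] : Type _ :=
  {θ : ProbabilityMeasure (Subgroup G) //
    ∀ g : G, Measure.map (conjSub g) (θ : Measure (Subgroup G)) = (θ : Measure (Subgroup G))}

noncomputable instance instTopIRSSpace (G : Type*) [Group G] :
    TopologicalSpace (IRSSpace G) :=
  instTopologicalSpaceSubtype

section SubgroupSpace

variable {G : Type*} [Group G]

lemma continuous_decide_mem (g : G) :
    Continuous fun H : Subgroup G => @decide (g ∈ H) (Classical.dec _) :=
  (continuous_apply g).comp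
    (continuous_induced_dom : Continuous fun (H : Subgroup G) (x : G) =>
      @decide (x ∈ H) (Classical.dec _))

lemma isClosed_setOf_mem (g : G) : IsClosed {H : Subgroup G | g ∈ H} := by
  convert (isClosed_discrete {true}).preimage (continuous_decide_mem g)
  ext H
  simp

lemma continuous_comap {A B : Type*} [Group A] [Group B] (ψ : A →* B) :
    Continuous (Subgroup.comap ψ) :=
  continuous_induced_rng.2 <| continuous_pi fun a => continuous_decide_mem (ψ a)

lemma conjSub_eq_comap (g : G) (H : Subgroup G) :
    conjSub g H = H.comap (MulAut.conj g⁻¹).toMonoidHom := by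
  ext x
  simp only [conjSub, Subgroup.mem_map, Subgroup.mem_comap, MulEquiv.coe_toMonoidHom,
    MulAut.conj_apply, inv_inv]
  exact ⟨by rintro ⟨y, hy, rfl⟩; simpa [mul_assoc] using hy,
    fun h => ⟨_, h, by simp [mul_assoc]⟩⟩

lemma continuous_conjSub (g : G) : Continuous (conjSub g : Subgroup G → Subgroup G) := by
  rw [show conjSub g = _ from funext (conjSub_eq_comap g)]
  exact continuous_comap _

lemma comap_comp_conjSub {A B : Type*} [Group A] [Group B] (ψ : A →* B) (a : A) :
    Subgroup.comap ψ ∘ conjSub (ψ a) = conjSub a ∘ Subgroup.comap ψ := by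
  ext H x
  simp [conjSub_eq_comap]

lemma range_comap {A B : Type*} [Group A] [Group B] (ψ : A →* B) :
    Set.range (Subgroup.comap ψ) = {H | ψ.ker ≤ H} := by
  ext H
  refine ⟨?_, fun h => ⟨H.map ψ, Subgroup.comap_map_eq_self h⟩⟩
  rintro ⟨K, rfl⟩
  exact Subgroup.ker_le_comap ψ K

lemma isClosedEmbedding_comap {A B : Type*} [Group A] [Group B] {ψ : A →* B}
    (hψ : Function.Surjective ψ) : Topology.IsClosedEmbedding (Subgroup.comap ψ) := by
  refine ⟨⟨?_, Subgroup.comap_injective hψ⟩, ?_⟩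
  · -- reading off the coordinates along a section of `ψ` recovers `H` from `H.comap ψ`
    refine Topology.IsInducing.of_comp (continuous_comap ψ)
      (continuous_pi fun b => continuous_decide_mem (Function.surjInv hψ b)) ?_
    convert Topology.IsInducing.induced
      fun (H : Subgroup B) (b : B) => @decide (b ∈ H) (Classical.dec _)
    · rfl
    simp [Function.surjInv_eq hψ]
  · have : {H : Subgroup A | ψ.ker ≤ H} = ⋂ k ∈ ψ.ker, {H | k ∈ H} := by
      ext H
      simp [SetLike.le_def]
    rw [range_comap ψ, this]
    exact isClosed_biInter fun k _ => isClosed_setOf_mem k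

end SubgroupSpace

section Factor

variable {G H α β : Type*} [MeasurableSpace α] [MeasurableSpace β] {μ : Measure α}
  {a : G → α → α} {b : H → β → β} {f : α → β} {ρ : H → G}

lemma ErgodicAct.map (herg : ErgodicAct a μ) (hf : Measurable f) (hρ : Function.Surjective ρ)
    (hfab : ∀ h, f ∘ a (ρ h) = b h ∘ f) : ErgodicAct b (μ.map f) := by
  intro s hs hinv
  have hpre : ∀ g, a g ⁻¹' (f ⁻¹' s) = f ⁻¹' s := by
    intro g
    obtain ⟨h, rfl⟩ := hρ g
    rw [← Set.preimage_comp, hfab h, Set.preimage_comp, hinv h]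
  rw [Measure.map_apply hf hs, Measure.map_apply hf hs.compl]
  exact herg _ (hf hs) hpre

lemma WeaklyMixingAct.map [SFinite μ] (hwm : WeaklyMixingAct a μ) (hf : Measurable f)
    (hρ : Function.Surjective ρ) (hfab : ∀ h, f ∘ a (ρ h) = b h ∘ f) :
    WeaklyMixingAct b (μ.map f) := by
  unfold WeaklyMixingAct
  rw [Measure.map_prod_map μ μ hf hf]
  exact ErgodicAct.map hwm (hf.prodMap hf) hρ fun h =>
    funext fun p => Prod.ext (congrFun (hfab h) p.1) (congrFun (hfab h) p.2)

lemma NonAtomicMeasure.map (hμ : NonAtomicMeasure μ) (hf : MeasurableEmbedding f) :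
    NonAtomicMeasure (μ.map f) := by
  intro y
  rw [hf.map_apply]
  rcases (Set.subsingleton_singleton.preimage hf.injective).eq_empty_or_singleton with h | ⟨x, h⟩
  · rw [h, measure_empty]
  · rw [h]
    exact hμ x

end Factor

section Pullback

variable {Δ Γ : Type*} [Group Δ] [Group Γ]

noncomputable def comapIRS (φ : Δ →* Γ) (θ : IRSSpace Γ) : IRSSpace Δ :=
  ⟨θ.1.map (continuous_comap φ).measurable.aemeasurable, fun d => by
    have hm := (continuous_comap φ).measurable
    rw [ProbabilityMeasure.toMeasure_map, Measure.map_map (continuous_conjSub d).measurable hm,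
      ← comap_comp_conjSub, ← Measure.map_map hm (continuous_conjSub (φ d)).measurable,
      θ.2 (φ d)]⟩

lemma continuous_comapIRS (φ : Δ →* Γ) : Continuous (comapIRS φ) :=
  ((ProbabilityMeasure.continuous_map (continuous_comap φ)).comp
    continuous_subtype_val).subtype_mk _

lemma comapIRS_injective {φ : Δ →* Γ} (hφ : Function.Surjective φ) :
    Function.Injective (comapIRS φ) := fun _ _ h =>
  Subtype.ext <| ProbabilityMeasure.toMeasure_injective <|
    (isClosedEmbedding_comap hφ).measurableEmbedding.map_injective
      (congrArg (fun θ : IRSSpace Δ => (θ.1 : Measure (Subgroup Δ))) h)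

end Pullback

theorem epimorphism_embeds_IRS_general {Δ Γ : Type*} [Group Δ] [Group Γ]
    (φ : Δ →* Γ) (hφ : Function.Surjective φ) :
    ∃ Ψ : IRSSpace Γ → IRSSpace Δ,
      (∀ θ : IRSSpace Γ,
        ((Ψ θ).1 : Measure (Subgroup Δ)) =
          Measure.map (fun Λ : Subgroup Γ => Subgroup.comap φ Λ)
            (θ.1 : Measure (Subgroup Γ))) ∧
      Continuous Ψ ∧ Function.Injective Ψ ∧
      ∀ θ : IRSSpace Γ,
        (ErgodicAct (fun (g : Γ) (Λ : Subgroup Γ) => conjSub g Λ)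
            (θ.1 : Measure (Subgroup Γ)) →
          ErgodicAct (fun (d : Δ) (Λ : Subgroup Δ) => conjSub d Λ)
            ((Ψ θ).1 : Measure (Subgroup Δ))) ∧
        (WeaklyMixingAct (fun (g : Γ) (Λ : Subgroup Γ) => conjSub g Λ)
            (θ.1 : Measure (Subgroup Γ)) →
          WeaklyMixingAct (fun (d : Δ) (Λ : Subgroup Δ) => conjSub d Λ)
            ((Ψ θ).1 : Measure (Subgroup Δ))) ∧
        (NonAtomicMeasure (θ.1 : Measure (Subgroup Γ)) →
          NonAtomicMeasure ((Ψ θ).1 : Measure (Subgroup Δ))) := by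
  have hΦ := isClosedEmbedding_comap hφ
  refine ⟨comapIRS φ, fun θ => rfl, continuous_comapIRS φ, comapIRS_injective hφ, fun θ =>
    ⟨fun h => h.map hΦ.continuous.measurable hφ (comap_comp_conjSub φ),
      fun h => h.map hΦ.continuous.measurable hφ (comap_comp_conjSub φ),
      fun h => h.map hΦ.measurableEmbedding⟩⟩

/-- **Proposition 8.21.** A surjective homomorphism `φ : Δ → Γ` induces, via
`Λ ↦ φ⁻¹(Λ)`, a (well-defined) continuous injective map `Ψ : IRS(Γ) → IRS(Δ)` that
preserves ergodicity, weak mixing and non-atomicity. -/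
theorem epimorphism_embeds_IRS {Δ Γ : Type*} [Group Δ] [Group Γ]
    [Countable Δ] [Countable Γ]
    (φ : Δ →* Γ) (hφ : Function.Surjective φ) :
    ∃ Ψ : IRSSpace Γ → IRSSpace Δ,
      (∀ θ : IRSSpace Γ,
        ((Ψ θ).1 : Measure (Subgroup Δ)) =
          Measure.map (fun Λ : Subgroup Γ => Subgroup.comap φ Λ)
            (θ.1 : Measure (Subgroup Γ))) ∧
      Continuous Ψ ∧ Function.Injective Ψ ∧
      ∀ θ : IRSSpace Γ,
        (ErgodicAct (fun (g : Γ) (Λ : Subgroup Γ) => conjSub g Λ)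
            (θ.1 : Measure (Subgroup Γ)) →
          ErgodicAct (fun (d : Δ) (Λ : Subgroup Δ) => conjSub d Λ)
            ((Ψ θ).1 : Measure (Subgroup Δ))) ∧
        (WeaklyMixingAct (fun (g : Γ) (Λ : Subgroup Γ) => conjSub g Λ)
            (θ.1 : Measure (Subgroup Γ)) →
          WeaklyMixingAct (fun (d : Δ) (Λ : Subgroup Δ) => conjSub d Λ)
            ((Ψ θ).1 : Measure (Subgroup Δ))) ∧
        (NonAtomicMeasure (θ.1 : Measure (Subgroup Γ)) →
          NonAtomicMeasure ((Ψ θ).1 : Measure (Subgroup Δ))) :=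
  epimorphism_embeds_IRS_general φ hφ

end IRSPaper
end
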